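/- arXiv:2410.07823 — 2 statements merged into one kernel-verified Lean document; each statement's English description precedes it below -/
import Mathlib

section
/- Let c > 0 and g ≤ g₁(c) := (1/3)(c+1)². With y₊ = (2/3)((c+1) + √((c+1)²-3g)) and γ₊ = 2c + (3-5y₊)/2, one has γ₊ > 0 if and only if c > 1/2 and g > g₁(c) - (1/75)(c - 1/2)². -/
theorem gamma_plus_sign (c g : ℝ) (hc : 0 < c) (hg : g ≤ (1/3) * (c + 1)^2) :
    let yp := (2/3) * ((c + 1) + Real.sqrt ((c + 1)^2 - 3 * g))
    (0 < 2 * c + (3 - 5 * yp) / 2 ↔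
      1/2 < c ∧ (1/3) * (c + 1)^2 - (1/75) * (c - 1/2)^2 < g) := by
  intro yp
  set s := Real.sqrt ((c + 1)^2 - 3 * g) with hsdef
  have hnn : (0:ℝ) ≤ (c + 1)^2 - 3 * g := by linarith
  have hs0 : 0 ≤ s := Real.sqrt_nonneg _
  have hs2 : s^2 = (c + 1)^2 - 3 * g := Real.sq_sqrt hnn
  have hyp : yp = (2/3) * ((c + 1) + s) := rfl
  constructor
  · intro h
    rw [hyp] at h
    have h5 : 5 * s < c - 1/2 := by linarith
    have hc2 : 1/2 < c := by linarith
    refine ⟨hc2, ?_⟩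
    nlinarith [sq_nonneg s]
  · rintro ⟨hc2, hg2⟩
    rw [hyp]
    have ht : s < (c - 1/2) / 5 := by
      nlinarith [sq_nonneg (s - (c - 1/2)/5)]
    linarith
end

section
/- For all c > 0: g₁**(c) ≤ g₋(c) if and only if c ≤ 3(1+√2), where g₁**(c) = (1/3)(c+1)² - 1/12 and g₋(c) = (1/3)(c+1)² - (1/3)δ₋² with δ₋ = (1/22)((10c+13) - √((10c+13)² + 44(c-1/2)²)). -/
set_option maxHeartbeats 1000000 in
lemma dm_sq_le_quarter_iff (c : ℝ) (hc : 0 < c) :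
    ((1/22) * ((10 * c + 13) - Real.sqrt ((10 * c + 13)^2 + 44 * (c - 1/2)^2)))^2 ≤ 1/4 ↔
      c ≤ 3 * (1 + Real.sqrt 2) := by
  set s := Real.sqrt ((10 * c + 13)^2 + 44 * (c - 1/2)^2) with hs
  have hs0 : 0 ≤ s := Real.sqrt_nonneg _
  have hssq : s^2 = (10 * c + 13)^2 + 44 * (c - 1/2)^2 := Real.sq_sqrt (by positivity)
  have hsge : 10 * c + 13 ≤ s := by nlinarith [sq_nonneg (c - 1/2)]
  have hr0 : (0:ℝ) ≤ Real.sqrt 2 := Real.sqrt_nonneg 2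
  have hr2 : (Real.sqrt 2)^2 = 2 := Real.sq_sqrt (by norm_num)
  have hr1 : (1:ℝ) ≤ Real.sqrt 2 := by nlinarith
  constructor
  · intro h
    have ht : (s - (10 * c + 13))^2 ≤ 121 := by nlinarith
    have hsle : s ≤ 10 * c + 13 + 11 := by
      nlinarith [sq_nonneg (s - (10 * c + 13) - 11)]
    have hq : c^2 - 6*c - 9 ≤ 0 := by nlinarith
    nlinarith [sq_nonneg (c - 3 - 3 * Real.sqrt 2)]
  · intro h
    have hq : c^2 - 6*c - 9 ≤ 0 := by nlinarith
    have hsle : s ≤ 10 * c + 13 + 11 := by nlinarith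
    have ht : (s - (10 * c + 13))^2 ≤ 121 := by
      nlinarith [mul_nonneg (sub_nonneg.2 hsge) (sub_nonneg.2 hsle)]
    nlinarith [ht]

theorem g1starstar_le_gminus_iff (c : ℝ) (hc : 0 < c) :
    let dm := (1/22) * ((10 * c + 13) - Real.sqrt ((10 * c + 13)^2 + 44 * (c - 1/2)^2))
    ((1/3) * (c + 1)^2 - 1/12 ≤ (1/3) * (c + 1)^2 - (1/3) * dm^2 ↔
      c ≤ 3 * (1 + Real.sqrt 2)) := by
  intro dm
  have key := dm_sq_le_quarter_iff c hc
  have hdm : dm = (1/22) * ((10 * c + 13) - Real.sqrt ((10 * c + 13)^2 + 44 * (c - 1/2)^2)) := rfl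
  rw [hdm]
  constructor
  · intro h
    exact key.1 (by linarith)
  · intro h
    have := key.2 h
    linarith
end
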